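/- arXiv:2004.05065 — 6 statements merged into one kernel-verified Lean document; each statement's English description precedes it below -/
import Mathlib

section
/- There exist a finite database D with |D| = n+1 (n ≥ 1), and a notion of stabilizing set and derivability such that the minimum stabilizing set has size 1 but every stabilizing set consisting only of derivable tuples has size n. Concretely: let D = {a₁,…,aₙ, b}; a set S stabilizes D iff b ∈ S or {a₁,…,aₙ} ⊆ S; derivable tuples are exactly a₁,…,aₙ. Then the minimum stabilizing set has size 1 while the minimum stabilizing set contained in the derivable tuples has size n. -/
open Finset

lemma Finset.nonempty_of_mem_or_forall_ne_mem {α : Type*} [Nontrivial α] {a : α}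
    {S : Finset α} (h : a ∈ S ∨ ∀ i, i ≠ a → i ∈ S) : S.Nonempty := by
  rcases h with ha | h
  · exact ⟨a, ha⟩
  · obtain ⟨b, hb⟩ := exists_ne a
    exact ⟨b, h b hb⟩

lemma Finset.eq_erase_of_subset_erase_of_mem_or_forall_ne_mem {α : Type*} [DecidableEq α]
    {s S : Finset α} {a : α} (hS : S ⊆ s.erase a) (h : a ∈ S ∨ ∀ i, i ≠ a → i ∈ S) :
    S = s.erase a := by
  rcases h with ha | h
  · exact absurd (hS ha) (notMem_erase a s)
  · exact hS.antisymm fun i hi => h i (ne_of_mem_erase hi)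

/-- Gap between independent and operational semantics: on `D = {a₁,…,aₙ,b}`
with `Stab S ↔ b ∈ S ∨ {a₁,…,aₙ} ⊆ S` and derivable tuples `{a₁,…,aₙ}`,
the minimum stabilizing set has size 1, but every stabilizing set contained in
the derivable tuples has size at least `n` (and one of size `n` exists). -/
theorem stmt_4 (n : ℕ) (hn : 1 ≤ n)
    (Stab : Finset (Fin (n + 1)) → Prop)
    (hStab : ∀ S, Stab S ↔ (Fin.last n ∈ S ∨ ∀ i, i ≠ Fin.last n → i ∈ S))
    (Der : Finset (Fin (n + 1))) (hDer : Der = Finset.univ.filter (· ≠ Fin.last n)) :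
    (∃ S, Stab S ∧ S.card = 1 ∧ ∀ S', Stab S' → 1 ≤ S'.card) ∧
    (∃ S ⊆ Der, Stab S ∧ S.card = n) ∧
    (∀ S ⊆ Der, Stab S → n ≤ S.card) := by
  have : Nontrivial (Fin (n + 1)) := Fin.nontrivial_iff_two_le.mpr (by omega)
  rw [filter_ne' univ (Fin.last n)] at hDer
  subst hDer
  have card_der : (univ.erase (Fin.last n)).card = n := by simp
  have stab_last : Stab {Fin.last n} := (hStab _).2 (.inl (mem_singleton_self _))
  have stab_der : Stab (univ.erase (Fin.last n)) :=
    (hStab _).2 (.inr fun i hi => mem_erase.2 ⟨hi, mem_univ i⟩)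
  refine ⟨⟨_, stab_last, card_singleton _, fun S' hS' => ?_⟩,
    ⟨_, subset_refl _, stab_der, card_der⟩, fun S hS hStabS => ?_⟩
  · exact (nonempty_of_mem_or_forall_ne_mem ((hStab S').1 hS')).card_pos
  · rw [eq_erase_of_subset_erase_of_mem_or_forall_ne_mem hS ((hStab S).1 hStabS), card_der]
end

section
/- Let D = {a, b} with two rules: rule 1 deletes a when both a and b are present, rule 2 deletes b when both a and b are present. Then there are exactly two minimum stabilizing sets, {a} and {b}, both of size 1; in particular the minimum stabilizing set is not unique. -/
theorem Set.minimum_ncard_meeting_iff_eq_singleton {α : Type*} {D T S : Set α} (hD : D.Finite)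
    (hTD : T ⊆ D) (hSD : S ⊆ D) :
    ((∃ x ∈ T, x ∈ S) ∧ ∀ S' ⊆ D, (∃ x ∈ T, x ∈ S') → S.ncard ≤ S'.ncard) ↔
      ∃ x ∈ T, S = {x} := by
  have one_le : ∀ S' ⊆ D, (∃ x ∈ T, x ∈ S') → 1 ≤ S'.ncard := fun S' hS'D ⟨x, _, hxS'⟩ =>
    (Set.ncard_pos (hD.subset hS'D)).2 ⟨x, hxS'⟩
  constructor
  · rintro ⟨⟨x, hxT, hxS⟩, hmin⟩
    have hle : S.ncard ≤ 1 := by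
      simpa using hmin {x} (Set.singleton_subset_iff.2 (hTD hxT)) ⟨x, hxT, rfl⟩
    obtain ⟨y, rfl⟩ := Set.ncard_eq_one.1 (hle.antisymm (one_le S hSD ⟨x, hxT, hxS⟩))
    obtain rfl : x = y := hxS
    exact ⟨x, hxT, rfl⟩
  · rintro ⟨x, hxT, rfl⟩
    exact ⟨⟨x, hxT, rfl⟩, fun S' hS'D hS' => by simpa using one_le S' hS'D hS'⟩

/-- Non-uniqueness of the minimum stabilizing set: for `D = {a, b}` with both
rules requiring `a` and `b` live, the minimum stabilizing sets are exactly
`{a}` and `{b}`, which are distinct. -/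
theorem stmt_11 {α : Type*} (a b : α) (hab : a ≠ b)
    (Stab : Set α → Prop) (hStab : ∀ S, Stab S ↔ a ∈ S ∨ b ∈ S) :
    (∀ S ⊆ ({a, b} : Set α),
      ((Stab S ∧ ∀ S' ⊆ ({a, b} : Set α), Stab S' → S.ncard ≤ S'.ncard) ↔
        (S = {a} ∨ S = {b}))) ∧ ({a} : Set α) ≠ {b} := by
  have hStab' : ∀ S, Stab S ↔ ∃ x ∈ ({a, b} : Set α), x ∈ S := by simp [hStab]
  refine ⟨fun S hSD => ?_, by simpa using hab⟩
  simp only [hStab']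
  rw [Set.minimum_ncard_meeting_iff_eq_singleton (Set.toFinite _) subset_rfl hSD]
  simp
end

section
/- With the same abstract model (derive : Set α → Set α → α → Prop monotone in the deleted set and antitone in the live set), the stage-semantics fixpoint Stage(P,D), obtained by iterating T(S) = S ∪ {x ∈ D \ S : derive (D\S) S x} from ∅, is contained in the end-semantics fixpoint E obtained by iterating T'(S) = S ∪ {x ∈ D : derive D S x} from ∅. -/
section DeletionSemantics

variable {α : Type*} (D : Set α) (derive : Set α → Set α → α → Prop)

/-- The operators `T` (stage semantics) and `T'` (end semantics); `S` is the set of tuples deleted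
so far. -/
def stageStep (S : Set α) : Set α := S ∪ {x | x ∈ D \ S ∧ derive (D \ S) S x}

def endStep (S : Set α) : Set α := S ∪ {x | x ∈ D ∧ derive D S x}

variable {D derive}

theorem monotone_endStep
    (hmonoΔ : ∀ (L Δ Δ' : Set α) (x : α), Δ ⊆ Δ' → derive L Δ x → derive L Δ' x) :
    Monotone (endStep D derive) := by
  rintro S T hST x (hxS | ⟨hxD, hx⟩)
  · exact Or.inl (hST hxS)
  · exact Or.inr ⟨hxD, hmonoΔ _ _ _ _ hST hx⟩

theorem stageStep_le_endStep
    (hantiL : ∀ (L L' Δ : Set α) (x : α), L' ⊆ L → derive L' Δ x → derive L Δ x) :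
    stageStep D derive ≤ endStep D derive := by
  rintro S x (hxS | ⟨⟨hxD, -⟩, hx⟩)
  · exact Or.inl hxS
  · exact Or.inr ⟨hxD, hantiL _ _ _ _ Set.sdiff_subset hx⟩

end DeletionSemantics

theorem stmt_13_general {α : Type*} (D : Set α)
    (derive : Set α → Set α → α → Prop)
    (hmonoΔ : ∀ (L Δ Δ' : Set α) (x : α), Δ ⊆ Δ' → derive L Δ x → derive L Δ' x)
    (hantiL : ∀ (L L' Δ : Set α) (x : α), L' ⊆ L → derive L' Δ x → derive L Δ x) :
    ∀ n : ℕ,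
      (fun S => S ∪ {x | x ∈ D \ S ∧ derive (D \ S) S x})^[n] ∅ ⊆
      (fun S => S ∪ {x | x ∈ D ∧ derive D S x})^[n] ∅ := fun n =>
  (monotone_endStep hmonoΔ).le_iterate_of_le (stageStep_le_endStep hantiL) n ∅

/-- Stage semantics is contained in end semantics: if derivation is monotone in
the deleted set and antitone in the live set, every iterate of the stage
operator from `∅` is contained in the corresponding iterate of the end
operator. -/
theorem stmt_13 {α : Type*} (D : Set α) (hD : D.Finite)
    (derive : Set α → Set α → α → Prop)
    (hmonoΔ : ∀ (L Δ Δ' : Set α) (x : α), Δ ⊆ Δ' → derive L Δ x → derive L Δ' x)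
    (hantiL : ∀ (L L' Δ : Set α) (x : α), L' ⊆ L → derive L' Δ x → derive L Δ x) :
    ∀ n : ℕ,
      (fun S => S ∪ {x | x ∈ D \ S ∧ derive (D \ S) S x})^[n] ∅ ⊆
      (fun S => S ∪ {x | x ∈ D ∧ derive D S x})^[n] ∅ :=
  stmt_13_general D derive hmonoΔ hantiL
end

section
/- There is a concrete instance where the minimum step-semantics result is strictly smaller than the stage-semantics result: take D = {a, b₁, …, bₙ}, with two rules: delete a if a and some bᵢ are both live; delete bᵢ if a and bᵢ are both live. Stage semantics deletes all of D (all rules fire simultaneously in stage 1), whereas there is a step-semantics run deleting only {a} (after which no rule fires). Hence Step(P,D) = {a} ⊊ D = Stage(P,D) for n ≥ 1. -/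
section StageSemantics

variable {α : Type*} (D : Set α) (derive : Set α → Set α → α → Prop)

theorem stageStep_self : stageStep D derive D = D := by
  simp [stageStep]

theorem stageStep_empty_of_forall_derive (h : ∀ x ∈ D, derive D ∅ x) :
    stageStep D derive ∅ = D := by
  ext x
  simpa [stageStep] using fun hx => h x hx

theorem iterate_stageStep_empty_of_forall_derive (h : ∀ x ∈ D, derive D ∅ x) (k : ℕ) :
    (stageStep D derive)^[k + 1] ∅ = D := by
  rw [Function.iterate_succ_apply, stageStep_empty_of_forall_derive D derive h,
    Function.iterate_fixed (stageStep_self D derive)]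

end StageSemantics

/-- `D = {0, 1, …, n}` encodes `{a, b₁, …, bₙ}` with `a = 0`. -/
theorem stmt_15 (n : ℕ) (hn : 1 ≤ n)
    (D : Set ℕ) (hD : D = {x | x < n + 1})
    (derive : Set ℕ → Set ℕ → ℕ → Prop)
    (hderive : ∀ L Δ x, derive L Δ x ↔
      ((x = 0 ∧ 0 ∈ L ∧ ∃ y, 1 ≤ y ∧ y ∈ L) ∨ (1 ≤ x ∧ x ∈ L ∧ 0 ∈ L))) :
    (∀ k : ℕ,
      (fun S => S ∪ {x | x ∈ D \ S ∧ derive (D \ S) S x})^[k + 1] ∅ = D) ∧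
    derive D ∅ 0 ∧
    (∀ x ∈ D \ ({0} : Set ℕ), ¬ derive (D \ {0}) {0} x) ∧
    ({0} : Set ℕ) ⊂ D := by
  have h0 : 0 ∈ D := hD ▸ Nat.succ_pos n
  have h1 : 1 ∈ D := hD ▸ Nat.lt_succ_of_le hn
  have derive_all : ∀ x ∈ D, derive D ∅ x := by
    intro x hx
    rw [hderive]
    rcases Nat.eq_zero_or_pos x with rfl | hx0
    · exact Or.inl ⟨rfl, h0, 1, le_rfl, h1⟩
    · exact Or.inr ⟨hx0, hx, h0⟩
  refine ⟨iterate_stageStep_empty_of_forall_derive D derive derive_all, derive_all 0 h0, ?_,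
    (Set.singleton_subset_iff.2 h0).ssubset_of_mem_notMem h1 (by simp)⟩
  -- every rule needs `a = 0` to be live
  rintro x - hx
  rcases (hderive _ _ _).1 hx with ⟨-, h, -⟩ | ⟨-, -, h⟩ <;> exact h.2 rfl
end

section
/- There is a concrete instance where stage semantics deletes strictly fewer tuples than every step-semantics run: take D = {a, b, c₁, …, cₙ} with rules: delete a if a,b live; delete b if a,b live; delete cᵢ if cᵢ live, Δa holds, and b live; delete cᵢ if cᵢ live, a live, and Δb holds. Stage semantics yields {a, b}. Every terminating step-semantics run yields a set of size n+1 (either {a, c₁,…,cₙ} or {b, c₁,…,cₙ}). Hence for n ≥ 2, |Stage(P,D)| < |Step(P,D)| and Stage(P,D) ⊄ Step(P,D). -/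
/-!
In stage semantics the rules for `a` and `b` fire together in the first stage; afterwards both
are deleted, and every rule for a `cᵢ` needs one of them live, so nothing else is ever deleted.
In a step run the first deletion is `a` or `b` alone. From then on exactly one of the two is
deleted: the rule for the other one needs both live. That mixed state is precisely what
enables the rules for the `cᵢ`, so a run can only stop once all of them are deleted.
-/

open Set

namespace StageStep

lemma run_subset {α : Type*} {D : Set α} {R : Set α → Set α → α → Prop} {S : ℕ → Set α}
    {T : ℕ} (hS0 : S 0 = ∅)
    (hstep : ∀ t < T, ∃ x ∈ D \ S t, R (D \ S t) (S t) x ∧ S (t + 1) = insert x (S t)) :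
    ∀ t ≤ T, S t ⊆ D := by
  intro t
  induction t with
  | zero => exact fun _ => hS0 ▸ empty_subset D
  | succ t ih =>
    intro ht
    obtain ⟨x, hx, -, hSt⟩ := hstep t (by omega)
    exact hSt ▸ insert_subset hx.1 (ih (by omega))

/-- `0` and `1` encode `a` and `b`, every `x ≥ 2` one of the `cᵢ`; `L` is the set of live
tuples and `Δ` the set of tuples deleted so far. -/
def Deletes (L Δ : Set ℕ) (x : ℕ) : Prop :=
  (x = 0 ∧ 0 ∈ L ∧ 1 ∈ L) ∨ (x = 1 ∧ 0 ∈ L ∧ 1 ∈ L) ∨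
    (2 ≤ x ∧ x ∈ L ∧ ((0 ∈ Δ ∧ 1 ∈ L) ∨ (0 ∈ L ∧ 1 ∈ Δ)))

def stageStep (D S : Set ℕ) : Set ℕ :=
  S ∪ {x | x ∈ D \ S ∧ Deletes (D \ S) S x}

def ExactlyOneOfPair (S : Set ℕ) : Prop :=
  (0 ∈ S ∧ 1 ∉ S) ∨ (0 ∉ S ∧ 1 ∈ S)

lemma Deletes.zero_mem_and_one_mem {L Δ : Set ℕ} {x : ℕ} (h : Deletes L Δ x) (hx : x ≤ 1) :
    0 ∈ L ∧ 1 ∈ L := by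
  rcases h with ⟨-, h⟩ | ⟨-, h⟩ | ⟨h, -⟩
  exacts [h, h, absurd hx (by omega)]

lemma Deletes.le_one_of_empty {L : Set ℕ} {x : ℕ} (h : Deletes L ∅ x) : x ≤ 1 := by
  rcases h with ⟨rfl, -⟩ | ⟨rfl, -⟩ | ⟨-, -, ⟨h, -⟩ | ⟨-, h⟩⟩
  exacts [zero_le_one, le_rfl, absurd h (notMem_empty 0), absurd h (notMem_empty 1)]

lemma stageStep_empty {D : Set ℕ} (h0 : 0 ∈ D) (h1 : 1 ∈ D) : stageStep D ∅ = {0, 1} := by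
  ext x
  simp only [stageStep, empty_union, sdiff_empty, mem_ofPred_eq, mem_insert_iff,
    mem_singleton_iff]
  constructor
  · rintro ⟨-, hx⟩
    have := hx.le_one_of_empty
    omega
  · rintro (rfl | rfl)
    exacts [⟨h0, Or.inl ⟨rfl, h0, h1⟩⟩, ⟨h1, Or.inr (Or.inl ⟨rfl, h0, h1⟩)⟩]

lemma stageStep_eq_self {D S : Set ℕ} (h0 : 0 ∈ S) (h1 : 1 ∈ S) : stageStep D S = S := by
  refine union_eq_left.2 fun x ⟨_, hx⟩ => ?_
  rcases hx with ⟨-, h, -⟩ | ⟨-, h, -⟩ | ⟨-, -, ⟨-, h⟩ | ⟨h, -⟩⟩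
  exacts [absurd h0 h.2, absurd h0 h.2, absurd h1 h.2, absurd h0 h.2]

lemma stageStep_iterate {D : Set ℕ} (h0 : 0 ∈ D) (h1 : 1 ∈ D) (k : ℕ) :
    (stageStep D)^[k + 1] ∅ = {0, 1} := by
  rw [Function.iterate_succ_apply, stageStep_empty h0 h1,
    Function.iterate_fixed (stageStep_eq_self (by simp) (by simp))]

lemma ExactlyOneOfPair.insert {D S : Set ℕ} {x : ℕ} (hS : ExactlyOneOfPair S)
    (hx : Deletes (D \ S) S x) : ExactlyOneOfPair (insert x S) := by
  have hx2 : 2 ≤ x := by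
    by_contra! hlt
    obtain ⟨⟨-, h0⟩, ⟨-, h1⟩⟩ := hx.zero_mem_and_one_mem (by omega)
    rcases hS with ⟨h, -⟩ | ⟨-, h⟩
    exacts [h0 h, h1 h]
  simpa only [ExactlyOneOfPair, mem_insert_iff, show (0 : ℕ) ≠ x by omega,
    show (1 : ℕ) ≠ x by omega, false_or] using hS

lemma exactlyOneOfPair_singleton {L : Set ℕ} {x : ℕ} (hx : Deletes L ∅ x) :
    ExactlyOneOfPair {x} := by
  have := hx.le_one_of_empty
  interval_cases x <;> simp [ExactlyOneOfPair]

lemma run_eq_empty_or_exactlyOneOfPair {D : Set ℕ} {S : ℕ → Set ℕ} {T : ℕ} (hS0 : S 0 = ∅)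
    (hstep : ∀ t < T, ∃ x ∈ D \ S t, Deletes (D \ S t) (S t) x ∧ S (t + 1) = insert x (S t)) :
    ∀ t ≤ T, S t = ∅ ∨ ExactlyOneOfPair (S t) := by
  intro t
  induction t with
  | zero => exact fun _ => Or.inl hS0
  | succ t ih =>
    intro ht
    obtain ⟨x, -, hx, hSt⟩ := hstep t (by omega)
    rw [hSt]
    rcases ih (by omega) with hempty | hone
    · rw [hempty] at hx
      rw [hempty, insert_empty_eq]
      exact Or.inr (exactlyOneOfPair_singleton hx)
    · exact Or.inr (hone.insert hx)

lemma ExactlyOneOfPair.eq_diff_of_stuck {D S : Set ℕ} (hS : ExactlyOneOfPair S) (hSD : S ⊆ D)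
    (h0D : 0 ∈ D) (h1D : 1 ∈ D) (hstuck : ∀ x ∈ D \ S, ¬ Deletes (D \ S) S x) :
    ∃ b ∈ ({0, 1} : Set ℕ), S = D \ {b} := by
  rcases hS with ⟨h0, h1⟩ | ⟨h0, h1⟩
  · refine ⟨1, by simp, Subset.antisymm (fun y hy => ⟨hSD hy, fun h => h1 (h ▸ hy)⟩)
      fun y ⟨hyD, hy1⟩ => ?_⟩
    by_contra hyS
    have hy0 : y ≠ 0 := by rintro rfl; exact hyS h0
    have hy1 : y ≠ 1 := hy1
    exact hstuck y ⟨hyD, hyS⟩ (Or.inr (Or.inr ⟨by omega, ⟨hyD, hyS⟩, Or.inl ⟨h0, h1D, h1⟩⟩))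
  · refine ⟨0, by simp, Subset.antisymm (fun y hy => ⟨hSD hy, fun h => h0 (h ▸ hy)⟩)
      fun y ⟨hyD, hy0⟩ => ?_⟩
    by_contra hyS
    have hy0 : y ≠ 0 := hy0
    have hy1 : y ≠ 1 := by rintro rfl; exact hyS h1
    exact hstuck y ⟨hyD, hyS⟩ (Or.inr (Or.inr ⟨by omega, ⟨hyD, hyS⟩, Or.inr ⟨⟨h0D, h0⟩, h1⟩⟩))

lemma ncard_setOf_lt_sdiff_singleton {n b : ℕ} (hb : b < n) :
    ({x | x < n} \ {b} : Set ℕ).ncard = n - 1 := by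
  rw [ncard_sdiff_singleton_of_mem (show b ∈ {x | x < n} from hb),
    show {x | x < n} = ((Finset.range n : Finset ℕ) : Set ℕ) by ext; simp,
    ncard_coe_finset, Finset.card_range]

end StageStep

open StageStep in
/-- A concrete instance where stage semantics deletes strictly fewer tuples
than every step-semantics run.  `D = {0, 1, 2, …, n+1}` encodes
`{a, b, c₁, …, cₙ}`; rules: delete 0 (resp. 1) when 0 and 1 are live; delete
`x ≥ 2` when `x` is live and either (0 deleted and 1 live) or (0 live and 1
deleted).  Stage semantics yields `{0, 1}`, while every terminating
step-semantics run yields a set of size `n + 1` that does not contain `{0,1}`. -/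
theorem stmt_16 (n : ℕ) (hn : 2 ≤ n)
    (D : Set ℕ) (hD : D = {x | x < n + 2})
    (derive : Set ℕ → Set ℕ → ℕ → Prop)
    (hderive : ∀ L Δ x, derive L Δ x ↔
      ((x = 0 ∧ 0 ∈ L ∧ 1 ∈ L) ∨ (x = 1 ∧ 0 ∈ L ∧ 1 ∈ L) ∨
        (2 ≤ x ∧ x ∈ L ∧ ((0 ∈ Δ ∧ 1 ∈ L) ∨ (0 ∈ L ∧ 1 ∈ Δ))))) :
    (∀ k : ℕ,
      (fun S => S ∪ {x | x ∈ D \ S ∧ derive (D \ S) S x})^[k + 1] ∅ = {0, 1}) ∧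
    (∀ (T : ℕ) (S : ℕ → Set ℕ), S 0 = ∅ →
      (∀ t < T, ∃ x ∈ D \ S t, derive (D \ S t) (S t) x ∧ S (t + 1) = insert x (S t)) →
      (∀ x ∈ D \ S T, ¬ derive (D \ S T) (S T) x) →
      (S T).ncard = n + 1 ∧ ({0, 1} : Set ℕ).ncard < (S T).ncard ∧
        ¬ ({0, 1} : Set ℕ) ⊆ S T) := by
  obtain rfl : derive = Deletes := funext₃ fun L Δ x => propext (hderive L Δ x)
  have h0D : 0 ∈ D := hD ▸ show 0 < n + 2 by omega
  have h1D : 1 ∈ D := hD ▸ show 1 < n + 2 by omega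
  refine ⟨stageStep_iterate h0D h1D, fun T S hS0 hstep hstuck => ?_⟩
  have hone : ExactlyOneOfPair (S T) := by
    refine (run_eq_empty_or_exactlyOneOfPair hS0 hstep T le_rfl).resolve_left fun hempty => ?_
    exact hstuck 0 (by simp [hempty, h0D]) (Or.inl ⟨rfl, by simp [hempty, h0D, h1D]⟩)
  obtain ⟨b, hb, hST⟩ := hone.eq_diff_of_stuck (run_subset hS0 hstep T le_rfl) h0D h1D hstuck
  have hcard : (S T).ncard = n + 1 := by
    rw [hST, hD, ncard_setOf_lt_sdiff_singleton (by rcases hb with rfl | rfl <;> omega)]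
    rfl
  refine ⟨hcard, by rw [hcard, ncard_pair zero_ne_one]; omega, fun hsub => ?_⟩
  exact (hST ▸ hsub hb).2 rfl
end

section
/- Let G = (V,E) be a finite graph and let S be a terminal set of a step-semantics run for the rule 'delete x if edge (x,y) exists and both x,y are live', i.e., S ⊆ V is built one vertex at a time where each added vertex has a live neighbor at the time of addition, and at termination no edge has both endpoints outside S. Then S is a vertex cover of G. Conversely, every minimal vertex cover C of G is realizable as such a terminal set. -/
/-!
A run grows the set of deleted vertices one vertex at a time, deleting `x` only while some edge
`{x, y}` has both ends live; it stops exactly when the deleted set is a vertex cover. Conversely,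
in a minimal vertex cover `C` every `b ∈ C` has a neighbour outside `C` (otherwise `C \ {b}` would
still cover), and that neighbour stays live throughout, so the vertices of `C` can be deleted in
any order.
-/

namespace SimpleGraph

variable {V : Type*} {G : SimpleGraph V}

theorem IsVertexCover.exists_mem_of_mem_edgeSet {c : Set V} (hc : G.IsVertexCover c)
    {e : Sym2 V} (he : e ∈ G.edgeSet) : ∃ v ∈ c, v ∈ e := by
  induction e using Sym2.ind with
  | _ x y =>
    rcases hc he with hx | hy
    · exact ⟨x, hx, Sym2.mem_mk_left x y⟩
    · exact ⟨y, hy, Sym2.mem_mk_right x y⟩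

theorem exists_adj_notMem_of_minimal_isVertexCover {C : Set V} (hC : Minimal G.IsVertexCover C)
    {b : V} (hb : b ∈ C) : ∃ c, G.Adj b c ∧ c ∉ C := by
  by_contra! hnbrs
  have hcover : G.IsVertexCover (C \ {b}) := by
    intro u v huv
    by_cases hu : u = b
    · subst hu; exact Or.inr ⟨hnbrs v huv, (G.ne_of_adj huv).symm⟩
    by_cases hv : v = b
    · subst hv; exact Or.inl ⟨hnbrs u huv.symm, G.ne_of_adj huv⟩
    exact (hC.prop huv).imp (fun h => ⟨h, hu⟩) (fun h => ⟨h, hv⟩)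
  exact (Set.minimal_iff_forall_ssubset.1 hC).2 (Set.sdiff_singleton_ssubset.2 hb) hcover

def IsDeletionStep (G : SimpleGraph V) (s s' : Set V) : Prop :=
  ∃ x y, G.Adj x y ∧ x ∉ s ∧ y ∉ s ∧ s' = insert x s

theorem isDeletionStep_take {L : List V} (hL : L.Nodup)
    (hout : ∀ x ∈ L, ∃ y, G.Adj x y ∧ y ∉ L) {t : ℕ} (ht : t < L.length) :
    G.IsDeletionStep {v | v ∈ L.take t} {v | v ∈ L.take (t + 1)} := by
  have hsplit := L.take_concat_get' t ht
  obtain ⟨y, hxy, hy⟩ := hout L[t] (L.getElem_mem ht)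
  have hx : L[t] ∉ L.take t := by
    have := (L.take_sublist (t + 1)).nodup hL
    rw [← hsplit, List.nodup_append] at this
    exact fun h => this.2.2 _ h _ (List.mem_singleton_self _) rfl
  refine ⟨L[t], y, hxy, hx, fun h => hy (List.mem_of_mem_take h), ?_⟩
  ext v
  rw [← hsplit]
  simp only [Set.mem_ofPred_eq, Set.mem_insert_iff, List.mem_append, List.mem_singleton, or_comm]

theorem exists_deletion_run_of_forall_exists_adj_notMem {C : Set V} (hC : C.Finite)
    (hout : ∀ b ∈ C, ∃ c, G.Adj b c ∧ c ∉ C) :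
    ∃ (T : ℕ) (S : ℕ → Set V), S 0 = ∅ ∧ (∀ t < T, G.IsDeletionStep (S t) (S (t + 1))) ∧
      S T = C := by
  set L := hC.toFinset.toList
  have hmem : ∀ v, v ∈ L ↔ v ∈ C := by simp [L]
  refine ⟨L.length, fun t => {v | v ∈ L.take t}, by simp, fun t ht => ?_, by simp [hmem]⟩
  refine isDeletionStep_take hC.toFinset.nodup_toList (fun x hx => ?_) ht
  obtain ⟨y, hxy, hy⟩ := hout x ((hmem x).1 hx)
  exact ⟨y, hxy, mt (hmem y).1 hy⟩

end SimpleGraph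

open SimpleGraph in
theorem stmt_17_general {V : Type*} [Fintype V] (G : SimpleGraph V) :
    (∀ (T : ℕ) (S : ℕ → Set V), S 0 = ∅ →
      (∀ t < T, ∃ x y, G.Adj x y ∧ x ∉ S t ∧ y ∉ S t ∧ S (t + 1) = insert x (S t)) →
      (∀ x y, G.Adj x y → x ∈ S T ∨ y ∈ S T) →
      ∀ e ∈ G.edgeSet, ∃ v ∈ S T, v ∈ e) ∧
    (∀ C : Set V, (∀ u v, G.Adj u v → u ∈ C ∨ v ∈ C) →
      (∀ C' ⊂ C, ¬ (∀ u v, G.Adj u v → u ∈ C' ∨ v ∈ C')) →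
      ∃ (T : ℕ) (S : ℕ → Set V), S 0 = ∅ ∧
        (∀ t < T, ∃ x y, G.Adj x y ∧ x ∉ S t ∧ y ∉ S t ∧ S (t + 1) = insert x (S t)) ∧
        S T = C ∧ (∀ x y, G.Adj x y → x ∈ S T ∨ y ∈ S T)) := by
  refine ⟨fun T S _ _ hterm _ he => IsVertexCover.exists_mem_of_mem_edgeSet hterm he,
    fun C hcover hmin => ?_⟩
  have hC : Minimal G.IsVertexCover C :=
    Set.minimal_iff_forall_ssubset.2
      ⟨fun _ _ => hcover _ _, fun C' hC' h => hmin C' hC' fun _ _ huv => h huv⟩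
  obtain ⟨T, S, h0, hsteps, hT⟩ := exists_deletion_run_of_forall_exists_adj_notMem
    (Set.toFinite C) fun b hb => exists_adj_notMem_of_minimal_isVertexCover hC hb
  exact ⟨T, S, h0, hsteps, hT, hT ▸ hcover⟩

/-- Step semantics for the vertex-cover delta rule: (1) every terminal set of a
step-semantics run (each step deletes a vertex with a live neighbor; at
termination no edge has both endpoints live) is a vertex cover; (2) every
minimal vertex cover is realizable as the terminal set of such a run. -/
theorem stmt_17 {V : Type*} [Fintype V] [DecidableEq V] (G : SimpleGraph V) :
    (∀ (T : ℕ) (S : ℕ → Set V), S 0 = ∅ →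
      (∀ t < T, ∃ x y, G.Adj x y ∧ x ∉ S t ∧ y ∉ S t ∧ S (t + 1) = insert x (S t)) →
      (∀ x y, G.Adj x y → x ∈ S T ∨ y ∈ S T) →
      ∀ e ∈ G.edgeSet, ∃ v ∈ S T, v ∈ e) ∧
    (∀ C : Set V, (∀ u v, G.Adj u v → u ∈ C ∨ v ∈ C) →
      (∀ C' ⊂ C, ¬ (∀ u v, G.Adj u v → u ∈ C' ∨ v ∈ C')) →
      ∃ (T : ℕ) (S : ℕ → Set V), S 0 = ∅ ∧
        (∀ t < T, ∃ x y, G.Adj x y ∧ x ∉ S t ∧ y ∉ S t ∧ S (t + 1) = insert x (S t)) ∧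
        S T = C ∧ (∀ x y, G.Adj x y → x ∈ S T ∨ y ∈ S T)) :=
  stmt_17_general G
end
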